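/- arXiv:math/0108124 — 6 statements merged into one kernel-verified Lean document; each statement's English description precedes it below -/
import Mathlib

section
/- Let X be a normed linear space, let E be a dense linear subspace of X, and let M be a closed linear subspace of X of finite codimension. Then E ∩ M is dense in M. -/
/-!
The image of the dense subspace `E` in the finite-dimensional Hausdorff space `X ⧸ M` is dense
and closed, hence everything. A linear right inverse of `E → X ⧸ M` is then a continuous section
`σ : X ⧸ M → X` with values in `E`, and `P = id - σ ∘ π` is a continuous projection onto `M`
mapping `E` into `E ⊓ M`. Applying `P` to approximations of `m = P m` from `E` gives
approximations from `E ⊓ M`.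
-/

namespace Submodule

variable {𝕜 X : Type*} [NontriviallyNormedField 𝕜] [CompleteSpace 𝕜]
  [AddCommGroup X] [TopologicalSpace X] [Module 𝕜 X]

theorem map_eq_top_of_dense {Y : Type*} [AddCommGroup Y] [TopologicalSpace Y]
    [IsTopologicalAddGroup Y] [Module 𝕜 Y] [ContinuousSMul 𝕜 Y] [T2Space Y]
    [FiniteDimensional 𝕜 Y] (f : X →L[𝕜] Y) (hf : DenseRange f) {D : Submodule 𝕜 X}
    (hD : Dense (D : Set X)) :
    D.map (f : X →ₗ[𝕜] Y) = ⊤ := by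
  have hdense : Dense (D.map (f : X →ₗ[𝕜] Y) : Set Y) := by
    simpa [map_coe] using hf.dense_image f.continuous hD
  rw [← SetLike.coe_set_eq, top_coe, ← hdense.closure_eq,
    (closed_of_finiteDimensional _).closure_eq]

theorem exists_projection_mapsTo_inf_of_dense [IsTopologicalAddGroup X] [ContinuousSMul 𝕜 X]
    {M D : Submodule 𝕜 X} [IsClosed (M : Set X)] [FiniteDimensional 𝕜 (X ⧸ M)]
    (hD : Dense (D : Set X)) :
    ∃ P : X →L[𝕜] X, Set.MapsTo P D (D ⊓ M) ∧ ∀ m ∈ M, P m = m := by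
  have hrange : (M.mkQL ∘L D.subtypeL).range = ⊤ := by
    change (M.mkQ.comp D.subtype).range = ⊤
    rw [LinearMap.range_comp, range_subtype]
    exact map_eq_top_of_dense M.mkQL M.mkQ_surjective.denseRange hD
  obtain ⟨σ, hσ⟩ := (M.mkQL ∘L D.subtypeL).exists_rightInverse_of_surjective hrange
  have hπσ (y : X ⧸ M) : Quotient.mk (σ y : X) = y := congr($hσ y)
  refine ⟨.id 𝕜 X - D.subtypeL ∘L σ ∘L M.mkQL, fun x hx => ⟨D.sub_mem hx (σ _).2, ?_⟩,
    fun m hm => ?_⟩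
  · simp [← Quotient.mk_eq_zero, hπσ]
  · simp [(Quotient.mk_eq_zero M).2 hm]

end Submodule

/-- If `E` is a dense linear subspace of a real normed space `X` and `M` is a closed
linear subspace of `X` of finite codimension (i.e. `X ⧸ M` is finite dimensional),
then `E ∩ M` is dense in `M`. -/
theorem dense_inter_of_dense_of_closed_finiteCodim
    {X : Type*} [NormedAddCommGroup X] [NormedSpace ℝ X]
    (E M : Submodule ℝ X) (hE : Dense (E : Set X))
    (hM : IsClosed (M : Set X)) (hcodim : FiniteDimensional ℝ (X ⧸ M)) :
    (M : Set X) ⊆ closure ((E ⊓ M : Submodule ℝ X) : Set X) := by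
  obtain ⟨P, hPE, hPM⟩ := Submodule.exists_projection_mapsTo_inf_of_dense (M := M) hE
  intro m hm
  rw [← hPM m hm]
  exact map_mem_closure P.continuous (hE m) hPE
end

section
/- Let X and Y be real normed vector spaces with X infinite-dimensional, let T : X → Y be a bounded linear operator, and let E be a dense linear subspace of X. Then τ(T|_E) = τ(T), where τ(T|_E) is computed with E in place of X; i.e., the quantity τ is densely invariant for bounded operators. -/
/-!
Given an infinite-dimensional `M ≤ X` and `ε > 0`, choose unit vectors `xᵢ ∈ M` and norm-one
functionals `fᵢ` with `fᵢ xᵢ = 1` and `fᵢ xⱼ = 0` for `i < j`. This triangular system controls the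
coefficients of any finite combination, `|aᵢ| ≤ 2ⁱ ‖∑ aⱼ xⱼ‖`, so replacing each `xⱼ` by a point
`eⱼ ∈ E` at distance `≲ 4⁻ʲ` moves `∑ aⱼ xⱼ` by a small multiple of its norm. Hence the `eⱼ` are
linearly independent and their span is an infinite-dimensional subspace of `E` lying uniformly close
to `M`, on whose unit sphere `‖T·‖` is at least `inf_{S_M} ‖T·‖ - ε`. The reverse inequality is
immediate since subspaces of `E` are subspaces of `X`.
-/

/-- `inf_{m ∈ S_M} ‖Tm‖`, the infimum of `‖Tm‖` over the unit sphere of a subspace `M`. -/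
noncomputable def sphereInf {X Y : Type*} [NormedAddCommGroup X] [NormedSpace ℝ X]
    [NormedAddCommGroup Y] [NormedSpace ℝ Y] (T : X →L[ℝ] Y) (M : Submodule ℝ X) : ℝ :=
  sInf {s : ℝ | ∃ m : X, m ∈ M ∧ ‖m‖ = 1 ∧ s = ‖T m‖}

/-- `τ(T) = sup_{M ∈ I(X)} inf_{m ∈ S_M} ‖Tm‖`. -/
noncomputable def opTau {X Y : Type*} [NormedAddCommGroup X] [NormedSpace ℝ X]
    [NormedAddCommGroup Y] [NormedSpace ℝ Y] (T : X →L[ℝ] Y) : ℝ :=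
  sSup {r : ℝ | ∃ M : Submodule ℝ X, ¬ FiniteDimensional ℝ M ∧ r = sphereInf T M}

open Finset Submodule
open Finsupp (linearCombination)

theorem Finsupp.linearCombination_eq_sum_range {R M : Type*} [Semiring R] [AddCommMonoid M]
    [Module R M] (v : ℕ → M) {c : ℕ →₀ R} {Q : ℕ} (hQ : c.support ⊆ range Q) :
    linearCombination R v c = ∑ j ∈ range Q, c j • v j :=
  Finsupp.linearCombination_apply_of_mem_supported R
    ((Finsupp.mem_supported R c).mpr (by exact_mod_cast hQ))

section TriangularSystem

variable {X : Type*} [NormedAddCommGroup X] [NormedSpace ℝ X]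

theorem Submodule.not_finiteDimensional_inf_ker {M : Submodule ℝ X}
    (hM : ¬ FiniteDimensional ℝ M) (f : StrongDual ℝ X) :
    ¬ FiniteDimensional ℝ (M ⊓ LinearMap.ker (f : X →ₗ[ℝ] ℝ) : Submodule ℝ X) := fun hfd =>
  hM <| Module.Finite.iff_fg.mpr <| fg_of_fg_map_of_fg_inf_ker (f : X →ₗ[ℝ] ℝ)
    (IsNoetherian.noetherian _) (Module.Finite.iff_fg.mp hfd)

theorem Submodule.exists_norm_eq_one {M : Submodule ℝ X} (hM : ¬ FiniteDimensional ℝ M) :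
    ∃ x ∈ M, ‖x‖ = 1 := by
  have : Nontrivial M := nontrivial_iff_ne_bot.mpr fun h => hM (h ▸ inferInstance)
  obtain ⟨x, hx⟩ := exists_norm_eq M zero_le_one
  exact ⟨x, x.2, hx⟩

theorem Submodule.exists_norm_eq_one_and_dual {M : Submodule ℝ X}
    (hM : ¬ FiniteDimensional ℝ M) :
    ∃ x ∈ M, ∃ f : StrongDual ℝ X, ‖x‖ = 1 ∧ ‖f‖ = 1 ∧ f x = 1 := by
  obtain ⟨x, hxM, hx⟩ := M.exists_norm_eq_one hM
  obtain ⟨f, hf, hfx⟩ := exists_dual_vector ℝ x (by simp [hx])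
  exact ⟨x, hxM, f, hx, hf, by simpa [hx] using hfx⟩

structure IsTriangularSystem (x : ℕ → X) (f : ℕ → StrongDual ℝ X) : Prop where
  norm_le_one : ∀ i, ‖x i‖ ≤ 1
  norm_dual_le_one : ∀ i, ‖f i‖ ≤ 1
  apply_self : ∀ i, f i (x i) = 1
  apply_of_lt : ∀ {i j}, i < j → f i (x j) = 0

theorem Submodule.exists_isTriangularSystem {M : Submodule ℝ X}
    (hM : ¬ FiniteDimensional ℝ M) :
    ∃ (x : ℕ → X) (f : ℕ → StrongDual ℝ X), (∀ i, x i ∈ M) ∧ IsTriangularSystem x f := by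
  choose! x hxN f hx hf hfx using fun N : Submodule ℝ X => N.exists_norm_eq_one_and_dual
  let N : ℕ → Submodule ℝ X := fun n =>
    Nat.rec (motive := fun _ => Submodule ℝ X) M (fun _ N => N ⊓ LinearMap.ker (f N : X →ₗ[ℝ] ℝ)) n
  have hN : ∀ n, ¬ FiniteDimensional ℝ ↥(N n) := fun n => by
    induction n with
    | zero => exact hM
    | succ n ih => exact not_finiteDimensional_inf_ker ih _
  have hanti : Antitone N := antitone_nat_of_succ_le fun _ => inf_le_left
  refine ⟨fun n => x (N n), fun n => f (N n), fun n => hanti n.zero_le (hxN _ (hN n)),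
    fun n => (hx _ (hN n)).le, fun n => (hf _ (hN n)).le, fun n => hfx _ (hN n), ?_⟩
  intro i j hij
  exact (hanti hij (hxN _ (hN j)) : x (N j) ∈ N i ⊓ LinearMap.ker (f (N i) : X →ₗ[ℝ] ℝ)).2

namespace IsTriangularSystem

variable {x : ℕ → X} {f : ℕ → StrongDual ℝ X}

theorem abs_apply_le_one (h : IsTriangularSystem x f) (i j : ℕ) : |f i (x j)| ≤ 1 := by
  simpa using (f i).le_of_opNorm_le_of_le (h.norm_dual_le_one i) (h.norm_le_one j)

theorem abs_le_two_pow_mul_norm_sum (h : IsTriangularSystem x f) (a : ℕ → ℝ) {Q i : ℕ}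
    (hi : i < Q) : |a i| ≤ 2 ^ i * ‖∑ j ∈ range Q, a j • x j‖ := by
  induction i using Nat.strong_induction_on with
  | _ i ih =>
  set v := ∑ j ∈ range Q, a j • x j
  have hfv : f i v = ∑ j ∈ range i, a j * f i (x j) + a i := calc
    f i v = ∑ j ∈ range Q, a j * f i (x j) := by simp [v, map_sum]
    _ = ∑ j ∈ range (i + 1), a j * f i (x j) := by
      refine (sum_subset (range_subset_range.mpr hi) fun j _ hji => ?_).symm
      rw [h.apply_of_lt (by simpa using hji), mul_zero]
    _ = _ := by rw [sum_range_succ, h.apply_self, mul_one]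
  have hearlier : |∑ j ∈ range i, a j * f i (x j)| ≤ (2 ^ i - 1) * ‖v‖ := calc
    _ ≤ ∑ j ∈ range i, |a j| := (abs_sum_le_sum_abs _ _).trans <| sum_le_sum fun j _ => by
      rw [abs_mul]; exact mul_le_of_le_one_right (abs_nonneg _) (h.abs_apply_le_one i j)
    _ ≤ ∑ j ∈ range i, 2 ^ j * ‖v‖ := sum_le_sum fun j hj =>
      ih j (mem_range.mp hj) ((mem_range.mp hj).trans hi)
    _ = (2 ^ i - 1) * ‖v‖ := by rw [← sum_mul, geom_sum_eq (by norm_num : (2 : ℝ) ≠ 1)]; ring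
  have hfv_le : |f i v| ≤ ‖v‖ := by
    simpa using (f i).le_of_opNorm_le (h.norm_dual_le_one i) v
  calc |a i| = |f i v - ∑ j ∈ range i, a j * f i (x j)| := by rw [hfv, add_sub_cancel_left]
    _ ≤ |f i v| + |∑ j ∈ range i, a j * f i (x j)| := abs_sub _ _
    _ ≤ ‖v‖ + (2 ^ i - 1) * ‖v‖ := add_le_add hfv_le hearlier
    _ = 2 ^ i * ‖v‖ := by ring

theorem abs_le_two_pow_mul_norm_linearCombination (h : IsTriangularSystem x f) (c : ℕ →₀ ℝ)
    (i : ℕ) : |c i| ≤ 2 ^ i * ‖linearCombination ℝ x c‖ := by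
  obtain ⟨Q, hQ⟩ := c.support.exists_nat_subset_range
  by_cases hi : i < Q
  · rw [Finsupp.linearCombination_eq_sum_range x hQ]
    exact h.abs_le_two_pow_mul_norm_sum c hi
  · rw [Finsupp.notMem_support_iff.mp fun hc => hi (mem_range.mp (hQ hc)), abs_zero]
    positivity

theorem norm_linearCombination_sub_le (h : IsTriangularSystem x f) {e : ℕ → X} {δ : ℝ}
    (he : ∀ j, ‖e j - x j‖ ≤ δ / 2 * (1 / 4) ^ j) (c : ℕ →₀ ℝ) :
    ‖linearCombination ℝ e c - linearCombination ℝ x c‖ ≤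
      δ * ‖linearCombination ℝ x c‖ := by
  have hδ : 0 ≤ δ := by linarith [(norm_nonneg _).trans (he 0)]
  obtain ⟨Q, hQ⟩ := c.support.exists_nat_subset_range
  set v := linearCombination ℝ x c
  have hpow : ∀ j : ℕ, (2 : ℝ) ^ j * (1 / 4) ^ j = (1 / 2) ^ j := fun j => by
    rw [← mul_pow]; norm_num
  calc ‖linearCombination ℝ e c - v‖ = ‖∑ j ∈ range Q, c j • (e j - x j)‖ := by
        simp only [v, Finsupp.linearCombination_eq_sum_range _ hQ, smul_sub, sum_sub_distrib]
    _ ≤ ∑ j ∈ range Q, (2 ^ j * ‖v‖) * (δ / 2 * (1 / 4) ^ j) :=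
      (norm_sum_le _ _).trans <| sum_le_sum fun j _ => by
        rw [norm_smul, Real.norm_eq_abs]
        exact mul_le_mul (h.abs_le_two_pow_mul_norm_linearCombination c j) (he j)
          (norm_nonneg _) (by positivity)
    _ = δ / 2 * ‖v‖ * ∑ j ∈ range Q, (1 / 2 : ℝ) ^ j := by
      rw [mul_sum]; exact sum_congr rfl fun j _ => by rw [← hpow]; ring
    _ ≤ δ / 2 * ‖v‖ * 2 := by gcongr; exact sum_geometric_two_le Q
    _ = δ * ‖v‖ := by ring

theorem linearIndependent_of_norm_sub_le (h : IsTriangularSystem x f) {e : ℕ → X} {δ : ℝ}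
    (hδ : δ < 1) (he : ∀ j, ‖e j - x j‖ ≤ δ / 2 * (1 / 4) ^ j) : LinearIndependent ℝ e := by
  refine linearIndependent_iff.mpr fun c hc => Finsupp.ext fun i => ?_
  have hx : linearCombination ℝ x c = 0 := by
    have hnear := h.norm_linearCombination_sub_le he c
    rw [hc, zero_sub, norm_neg] at hnear
    exact norm_eq_zero.mp (by nlinarith [norm_nonneg (linearCombination ℝ x c)])
  simpa [hx] using h.abs_le_two_pow_mul_norm_linearCombination c i

end IsTriangularSystem

theorem Submodule.exists_le_not_finiteDimensional_near {E M : Submodule ℝ X}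
    (hE : Dense (E : Set X)) (hM : ¬ FiniteDimensional ℝ M) {η : ℝ} (hη : 0 < η) :
    ∃ N ≤ E, ¬ FiniteDimensional ℝ N ∧ ∀ n ∈ N, ∃ m ∈ M, ‖n - m‖ ≤ η * ‖n‖ := by
  obtain ⟨x, f, hxM, hxf⟩ := M.exists_isTriangularSystem hM
  set δ := min (1 / 2) (η / 2)
  have happrox : ∀ j, ∃ e ∈ E, ‖e - x j‖ ≤ δ / 2 * (1 / 4) ^ j := fun j => by
    obtain ⟨e, heE, hdist⟩ := hE.exists_dist_lt (x j) (by positivity : 0 < δ / 2 * (1 / 4) ^ j)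
    exact ⟨e, heE, by rw [norm_sub_rev, ← dist_eq_norm]; exact hdist.le⟩
  choose e heE hex using happrox
  have hli := hxf.linearIndependent_of_norm_sub_le
    (by linarith [min_le_left (1 / 2 : ℝ) (η / 2)]) hex
  refine ⟨span ℝ (Set.range e), span_le.mpr (Set.range_subset_iff.mpr heE),
    fun _ => have := (linearIndependent_span hli).finite; not_finite ℕ, ?_⟩
  intro n hn
  obtain ⟨c, rfl⟩ : n ∈ LinearMap.range (linearCombination ℝ e) := by
    rwa [Finsupp.range_linearCombination]
  set v := linearCombination ℝ x c
  have hvM : v ∈ M := span_le.mpr (Set.range_subset_iff.mpr hxM)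
    (Finsupp.range_linearCombination (v := x) ℝ ▸ ⟨c, rfl⟩)
  have hnear := hxf.norm_linearCombination_sub_le hex c
  have hv_le : ‖v‖ ≤ 2 * ‖linearCombination ℝ e c‖ := by
    nlinarith [norm_le_insert' v (linearCombination ℝ e c),
      norm_sub_rev v (linearCombination ℝ e c), min_le_left (1 / 2 : ℝ) (η / 2), norm_nonneg v]
  refine ⟨v, hvM, ?_⟩
  calc _ ≤ δ * ‖v‖ := hnear
    _ ≤ η / 2 * (2 * ‖linearCombination ℝ e c‖) :=
      mul_le_mul (min_le_right _ _) hv_le (norm_nonneg _) (by positivity)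
    _ = η * ‖linearCombination ℝ e c‖ := by ring

end TriangularSystem

section Tau

variable {X Y : Type*} [NormedAddCommGroup X] [NormedSpace ℝ X]
  [NormedAddCommGroup Y] [NormedSpace ℝ Y] (T : X →L[ℝ] Y)

theorem sphereInf_nonneg (M : Submodule ℝ X) : 0 ≤ sphereInf T M :=
  Real.sInf_nonneg <| by rintro _ ⟨m, -, -, rfl⟩; exact norm_nonneg _

theorem sphereInf_le {M : Submodule ℝ X} {m : X} (hm : m ∈ M) (hm1 : ‖m‖ = 1) :
    sphereInf T M ≤ ‖T m‖ :=
  csInf_le ⟨0, by rintro _ ⟨m, -, -, rfl⟩; exact norm_nonneg _⟩ ⟨m, hm, hm1, rfl⟩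

theorem sphereInf_mul_norm_le {M : Submodule ℝ X} {v : X} (hv : v ∈ M) :
    sphereInf T M * ‖v‖ ≤ ‖T v‖ := by
  rcases eq_or_ne v 0 with rfl | hv0
  · simp
  have := sphereInf_le T (M.smul_mem ‖v‖⁻¹ hv) (norm_smul_inv_norm hv0)
  rwa [map_smul, norm_smul, norm_inv, norm_norm, inv_mul_eq_div,
    le_div_iff₀ (norm_pos_iff.mpr hv0)] at this

theorem sphereInf_le_opNorm (M : Submodule ℝ X) : sphereInf T M ≤ ‖T‖ := by
  rcases Set.eq_empty_or_nonempty {s : ℝ | ∃ m : X, m ∈ M ∧ ‖m‖ = 1 ∧ s = ‖T m‖} with h | h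
  · rw [sphereInf, h, Real.sInf_empty]
    positivity
  · obtain ⟨_, m, hm, hm1, rfl⟩ := h
    simpa [hm1] using (sphereInf_le T hm hm1).trans (T.le_opNorm m)

theorem sub_le_sphereInf_of_near {M N : Submodule ℝ X} (hN : ¬ FiniteDimensional ℝ N) {η : ℝ}
    (hnear : ∀ n ∈ N, ∃ m ∈ M, ‖n - m‖ ≤ η * ‖n‖) :
    sphereInf T M - 2 * ‖T‖ * η ≤ sphereInf T N := by
  obtain ⟨n₀, hn₀, hn₀1⟩ := N.exists_norm_eq_one hN
  refine le_csInf ⟨_, n₀, hn₀, hn₀1, rfl⟩ ?_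
  rintro _ ⟨n, hn, hn1, rfl⟩
  obtain ⟨m, hm, hnm⟩ := hnear n hn
  rw [hn1, mul_one] at hnm
  have hη : 0 ≤ η := (norm_nonneg _).trans hnm
  have hm_ge : 1 - η ≤ ‖m‖ := by linarith [norm_le_insert' n m]
  have hT_sub : ‖T n - T m‖ ≤ ‖T‖ * η := by
    rw [← map_sub]; exact T.le_of_opNorm_le_of_le le_rfl hnm
  nlinarith [sphereInf_mul_norm_le T hm, sphereInf_nonneg T M, sphereInf_le_opNorm T M,
    norm_le_insert' (T m) (T n), norm_sub_rev (T m) (T n)]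

theorem sphereInf_comp_subtypeL (E : Submodule ℝ X) (M : Submodule ℝ E) :
    sphereInf (T.comp E.subtypeL) M = sphereInf T (M.map E.subtype) := by
  unfold sphereInf
  congr 1
  ext s
  constructor
  · rintro ⟨m, hm, hm1, rfl⟩
    exact ⟨m, ⟨m, hm, rfl⟩, hm1, rfl⟩
  · rintro ⟨_, ⟨m, hm, rfl⟩, hm1, rfl⟩
    exact ⟨m, hm, hm1, rfl⟩

theorem opTau_nonneg : 0 ≤ opTau T :=
  Real.sSup_nonneg <| by rintro _ ⟨M, -, rfl⟩; exact sphereInf_nonneg T M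

theorem sphereInf_le_opTau {M : Submodule ℝ X} (hM : ¬ FiniteDimensional ℝ M) :
    sphereInf T M ≤ opTau T :=
  le_csSup ⟨‖T‖, by rintro _ ⟨M, -, rfl⟩; exact sphereInf_le_opNorm T M⟩ ⟨M, hM, rfl⟩

theorem opTau_comp_subtypeL_le (E : Submodule ℝ X) : opTau (T.comp E.subtypeL) ≤ opTau T := by
  refine Real.sSup_le ?_ (opTau_nonneg T)
  rintro _ ⟨M, hM, rfl⟩
  rw [sphereInf_comp_subtypeL]
  exact sphereInf_le_opTau T fun _ =>
    hM (Module.Finite.equiv (equivMapOfInjective _ E.injective_subtype M).symm)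

theorem sphereInf_le_opTau_comp_subtypeL {E N : Submodule ℝ X} (hNE : N ≤ E)
    (hN : ¬ FiniteDimensional ℝ N) : sphereInf T N ≤ opTau (T.comp E.subtypeL) := by
  have hmap : (N.comap E.subtype).map E.subtype = N := by
    rw [map_comap_subtype, inf_eq_right.mpr hNE]
  have := sphereInf_le_opTau (T.comp E.subtypeL) (M := N.comap E.subtype) fun _ =>
    hN (hmap ▸ Module.Finite.map _ _)
  rwa [sphereInf_comp_subtypeL, hmap] at this

end Tau

theorem tau_densely_invariant_general {X Y : Type*} [NormedAddCommGroup X] [NormedSpace ℝ X]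
    [NormedAddCommGroup Y] [NormedSpace ℝ Y]
    (T : X →L[ℝ] Y) (E : Submodule ℝ X) (hE : Dense (E : Set X)) :
    opTau (T.comp E.subtypeL) = opTau T := by
  refine le_antisymm (opTau_comp_subtypeL_le T E) (Real.sSup_le ?_ (opTau_nonneg _))
  rintro _ ⟨M, hM, rfl⟩
  refine le_of_forall_pos_le_add fun ε hε => ?_
  set η := ε / (2 * ‖T‖ + 1)
  obtain ⟨N, hNE, hN, hnear⟩ := exists_le_not_finiteDimensional_near hE hM (by positivity : 0 < η)
  have hcost : 2 * ‖T‖ * η ≤ ε := by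
    rw [mul_div_assoc', div_le_iff₀ (by positivity)]
    nlinarith [norm_nonneg T]
  linarith [sub_le_sphereInf_of_near T hN hnear, sphereInf_le_opTau_comp_subtypeL T hNE hN]

/-- `τ` is densely invariant: `τ(T|_E) = τ(T)` for any dense subspace `E`. -/
theorem tau_densely_invariant {X Y : Type*} [NormedAddCommGroup X] [NormedSpace ℝ X]
    [NormedAddCommGroup Y] [NormedSpace ℝ Y] (hX : ¬ FiniteDimensional ℝ X)
    (T : X →L[ℝ] Y) (E : Submodule ℝ X) (hE : Dense (E : Set X)) :
    opTau (T.comp E.subtypeL) = opTau T :=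
  tau_densely_invariant_general T E hE
end

section
/- Let X be a real normed vector space and let M be an infinite-dimensional linear subspace of X. Then there exist a sequence (m_n)_{n≥1} of vectors of M and a sequence (x'_n)_{n≥1} of continuous linear functionals on X such that for every n, ‖m_n‖ = ‖x'_n‖ = x'_n(m_n) = 1, and x'_i(m_n) = 0 for all 1 ≤ i < n. -/
/-! Finitely many functionals cannot separate the points of an infinite-dimensional subspace, so
at each stage there is a unit vector of `M` annihilated by all functionals chosen so far; a
Hahn–Banach norming functional of that vector is the next functional. -/

theorem Submodule.exists_mem_ne_zero_forall_eq_zero {K V ι : Type*} [Field K] [AddCommGroup V]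
    [Module K V] [Finite ι] (M : Submodule K V) (hM : ¬ FiniteDimensional K M)
    (f : ι → V →ₗ[K] K) : ∃ x ∈ M, x ≠ 0 ∧ ∀ i, f i x = 0 := by
  let φ : M →ₗ[K] ι → K := LinearMap.pi fun i ↦ f i ∘ₗ M.subtype
  have hker : LinearMap.ker φ ≠ ⊥ := fun h ↦
    hM (FiniteDimensional.of_injective φ (LinearMap.ker_eq_bot.mp h))
  obtain ⟨y, hy, hy0⟩ := Submodule.exists_mem_ne_zero_of_ne_bot hker
  exact ⟨y, y.2, by simpa using hy0, fun i ↦ congrFun hy i⟩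

theorem Submodule.exists_norm_eq_one_dual_forall_eq_zero {𝕜 X ι : Type*} [RCLike 𝕜]
    [NormedAddCommGroup X] [NormedSpace 𝕜 X] [Finite ι] (M : Submodule 𝕜 X)
    (hM : ¬ FiniteDimensional 𝕜 M) (g : ι → StrongDual 𝕜 X) :
    ∃ x ∈ M, ∃ f : StrongDual 𝕜 X, ‖x‖ = 1 ∧ ‖f‖ = 1 ∧ f x = 1 ∧ ∀ i, g i x = 0 := by
  obtain ⟨y, hyM, hy0, hyg⟩ :=
    M.exists_mem_ne_zero_forall_eq_zero hM fun i ↦ (g i : X →ₗ[𝕜] 𝕜)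
  have hy : ‖y‖ ≠ 0 := norm_ne_zero_iff.mpr hy0
  let x := (‖y‖⁻¹ : 𝕜) • y
  have hx : ‖x‖ = 1 := by simp [x, norm_smul, hy]
  obtain ⟨f, hf, hfx⟩ := exists_dual_vector 𝕜 x (by simp [hx])
  exact ⟨x, M.smul_mem _ hyM, f, hx, hf, by simp [hfx, hx], fun i ↦ by simp [x, show g i y = 0 from hyg i]⟩

/-- In any infinite-dimensional subspace `M` of a real normed space `X` one can find
a sequence `(m n)` in `M` and a sequence `(x' n)` of continuous linear functionals on `X`
such that `‖m n‖ = ‖x' n‖ = x' n (m n) = 1` for all `n`, while `x' i (m n) = 0`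
whenever `i < n`. (Indexing starts at `0` rather than `1`.) -/
theorem exists_biorthogonal_sequence {X : Type*} [NormedAddCommGroup X] [NormedSpace ℝ X]
    (M : Submodule ℝ X) (hM : ¬ FiniteDimensional ℝ M) :
    ∃ (m : ℕ → X) (x' : ℕ → (X →L[ℝ] ℝ)),
      (∀ n, m n ∈ M) ∧
      (∀ n, ‖m n‖ = 1 ∧ ‖x' n‖ = 1 ∧ x' n (m n) = 1) ∧
      (∀ i n, i < n → x' i (m n) = 0) := by
  obtain ⟨p, hp, hpr⟩ := exists_seq_of_forall_finset_exists
    (fun p : X × StrongDual ℝ X ↦ p.1 ∈ M ∧ ‖p.1‖ = 1 ∧ ‖p.2‖ = 1 ∧ p.2 p.1 = 1)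
    (fun p q ↦ p.2 q.1 = 0) fun s _ ↦ by
      obtain ⟨x, hxM, f, hx⟩ :=
        M.exists_norm_eq_one_dual_forall_eq_zero hM fun q : s ↦ q.1.2
      exact ⟨(x, f), ⟨hxM, hx.1, hx.2.1, hx.2.2.1⟩, fun q hq ↦ hx.2.2.2 ⟨q, hq⟩⟩
  exact ⟨fun n ↦ (p n).1, fun n ↦ (p n).2, fun n ↦ (hp n).1, fun n ↦ (hp n).2, hpr⟩
end

section
/- Let X be a real normed vector space, let (m_n)_{n≥1} be vectors in X and (x'_n)_{n≥1} continuous linear functionals on X such that for every n, ‖m_n‖ = ‖x'_n‖ = x'_n(m_n) = 1 and x'_i(m_n) = 0 for all 1 ≤ i < n. Then for every n ≥ 1, all scalars a_1, …, a_n, and every 1 ≤ i ≤ n, the vector w = a_1 m_1 + ⋯ + a_n m_n satisfies |a_i| ≤ 2^{i−1} ‖w‖. -/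
/-!
Applying `x' i` to `w` kills every `m j` with `j > i` and returns `a i` from `m i`, so
`a i = x' i w - ∑_{j<i} a j x' i (m j)` and hence `|a i| ≤ ‖w‖ + ∑_{j<i} |a j|`.
A sequence bounded by a constant plus the sum of its predecessors grows at most like `2 ^ i`.
-/

open Finset

theorem le_two_pow_mul_of_le_add_sum_range {b : ℕ → ℝ} {C : ℝ} {n : ℕ}
    (h : ∀ i < n, b i ≤ C + ∑ j ∈ range i, b j) : ∀ i < n, b i ≤ 2 ^ i * C := by
  intro i
  induction i using Nat.strong_induction_on with
  | _ i ih =>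
  intro hi
  have hsum : ∑ j ∈ range i, b j ≤ ∑ j ∈ range i, 2 ^ j * C :=
    sum_le_sum fun j hj => ih j (mem_range.1 hj) ((mem_range.1 hj).trans hi)
  have hgeom : ∑ j ∈ range i, (2 : ℝ) ^ j = 2 ^ i - 1 := by
    rw [← geom_sum_mul]
    norm_num
  calc b i ≤ C + ∑ j ∈ range i, b j := h i hi
    _ ≤ C + ∑ j ∈ range i, 2 ^ j * C := by gcongr
    _ = 2 ^ i * C := by rw [← sum_mul, hgeom]; ring

theorem LinearMap.apply_sum_range_smul_of_triangular {R M : Type*} [CommRing R]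
    [AddCommGroup M] [Module R M] (f : M →ₗ[R] R) (m : ℕ → M) {i n : ℕ} (hi : i < n)
    (hfi : f (m i) = 1) (hf : ∀ j, i < j → f (m j) = 0) (a : ℕ → R) :
    f (∑ j ∈ Finset.range n, a j • m j) = ∑ j ∈ Finset.range i, a j * f (m j) + a i := by
  have htail :
      ∑ j ∈ Finset.range n, a j * f (m j) = ∑ j ∈ Finset.range (i + 1), a j * f (m j) := by
    refine (sum_subset (range_subset_range.2 hi) fun j _ hj => ?_).symm
    rw [hf j (by simpa using hj), mul_zero]
  simp only [map_sum, map_smul, smul_eq_mul]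
  rw [htail, sum_range_succ, hfi, mul_one]

theorem norm_coeff_le_norm_add_sum_range {𝕜 X : Type*} [NontriviallyNormedField 𝕜]
    [NormedAddCommGroup X] [NormedSpace 𝕜 X] (f : X →L[𝕜] 𝕜) (hf : ‖f‖ ≤ 1)
    (m : ℕ → X) (hm : ∀ j, ‖m j‖ ≤ 1) {i n : ℕ} (hi : i < n)
    (hfi : f (m i) = 1) (hfj : ∀ j, i < j → f (m j) = 0) (a : ℕ → 𝕜) :
    ‖a i‖ ≤ ‖∑ j ∈ range n, a j • m j‖ + ∑ j ∈ range i, ‖a j‖ := by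
  set w := ∑ j ∈ range n, a j • m j
  have hfw : f w = ∑ j ∈ range i, a j * f (m j) + a i :=
    f.toLinearMap.apply_sum_range_smul_of_triangular m hi hfi hfj a
  have hai : a i = f w - ∑ j ∈ range i, a j * f (m j) := by
    rw [hfw]
    ring
  have hterm : ∀ j, ‖a j * f (m j)‖ ≤ ‖a j‖ := fun j =>
    calc ‖a j * f (m j)‖ = ‖a j‖ * ‖f (m j)‖ := norm_mul _ _
      _ ≤ ‖a j‖ * 1 := by
        gcongr
        simpa using (f.le_of_opNorm_le hf (m j)).trans (by simpa using hm j)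
      _ = ‖a j‖ := mul_one _
  calc ‖a i‖ ≤ ‖f w‖ + ‖∑ j ∈ range i, a j * f (m j)‖ := hai ▸ norm_sub_le _ _
    _ ≤ ‖w‖ + ∑ j ∈ range i, ‖a j‖ := by
      gcongr
      · simpa using f.le_of_opNorm_le hf w
      · exact (norm_sum_le _ _).trans (sum_le_sum fun j _ => hterm j)

/-- Indexing starts at `0`, so the paper's bound `2 ^ (i - 1)` for `1 ≤ i ≤ n` becomes
`2 ^ i` for `0 ≤ i < n`. -/
theorem coeff_bound_of_biorthogonal {X : Type*} [NormedAddCommGroup X] [NormedSpace ℝ X]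
    (m : ℕ → X) (x' : ℕ → (X →L[ℝ] ℝ))
    (hnorm : ∀ n, ‖m n‖ = 1 ∧ ‖x' n‖ = 1 ∧ x' n (m n) = 1)
    (horth : ∀ i n, i < n → x' i (m n) = 0)
    (n : ℕ) (a : ℕ → ℝ) (i : ℕ) (hi : i < n) :
    |a i| ≤ 2 ^ i * ‖∑ j ∈ Finset.range n, a j • m j‖ := by
  have hstep : ∀ k < n, |a k| ≤ ‖∑ j ∈ range n, a j • m j‖ + ∑ j ∈ range k, |a j| := by
    intro k hk
    simpa only [Real.norm_eq_abs] using
      norm_coeff_le_norm_add_sum_range (x' k) (hnorm k).2.1.le m (fun j => (hnorm j).1.le) hk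
        (hnorm k).2.2 (horth k) a
  exact le_two_pow_mul_of_le_add_sum_range hstep i hi
end

section
/- Let X be a real normed vector space, let (m_n)_{n≥1} be vectors in X and (x'_n)_{n≥1} continuous linear functionals on X such that for every n, ‖m_n‖ = ‖x'_n‖ = x'_n(m_n) = 1 and x'_i(m_n) = 0 for all 1 ≤ i < n. Let 0 < ε < 1 and 0 < δ ≤ 1, and let (z_n)_{n≥1} be vectors in X satisfying ‖z_n − m_n‖ ≤ 2^{1−2n} ε δ. Then for every n ≥ 1 and all real scalars a_1, …, a_n not all zero, the vectors z = a_1 z_1 + ⋯ + a_n z_n and w = a_1 m_1 + ⋯ + a_n m_n satisfy ‖z − w‖ < ε δ ‖w‖, and consequently (1 − ε)‖w‖ < ‖z‖ < (1 + ε)‖w‖. -/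
/-!
Because `x' i` kills every `m j` with `j > i` and sends `m i` to `1`, applying it to
`w = ∑ a j • m j` expresses `a i` through `x' i w` and the earlier coefficients, so by induction
`‖a i‖ ≤ 2 ^ i ‖w‖`. In particular `w ≠ 0` when some `a i ≠ 0`, and the perturbation
`z - w = ∑ a j • (z j - m j)` has norm at most `∑ 2 ^ j ‖w‖ ε δ / 2 ^ (2 j + 1) < ε δ ‖w‖`.
The bounds on `‖z‖` then follow from the triangle inequality.
-/

open Finset

lemma sum_two_pow_div_two_pow_two_mul_add_one (n : ℕ) :
    ∑ j ∈ range n, (2 : ℝ) ^ j / 2 ^ (2 * j + 1) = 1 - (1 / 2) ^ n := by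
  induction n with
  | zero => simp
  | succ k ih =>
    rw [sum_range_succ, ih, one_div_pow, one_div_pow]
    field_simp
    ring

lemma norm_bounds_of_norm_sub_lt_mul {E : Type*} [SeminormedAddCommGroup E] {u v : E} {ε : ℝ}
    (h : ‖u - v‖ < ε * ‖v‖) : (1 - ε) * ‖v‖ < ‖u‖ ∧ ‖u‖ < (1 + ε) * ‖v‖ := by
  have h₁ := norm_sub_norm_le v u
  have h₂ := norm_sub_norm_le u v
  rw [norm_sub_rev] at h₁
  constructor <;> linarith

section Triangular

variable {𝕜 X : Type*} [NontriviallyNormedField 𝕜] [SeminormedAddCommGroup X] [NormedSpace 𝕜 X]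
  {m : ℕ → X} {x' : ℕ → X →L[𝕜] 𝕜}

lemma apply_sum_smul_eq_of_triangular (hdiag : ∀ i, x' i (m i) = 1)
    (horth : ∀ i j, i < j → x' i (m j) = 0) (a : ℕ → 𝕜) {i n : ℕ} (hi : i < n) :
    x' i (∑ j ∈ range n, a j • m j) = ∑ j ∈ range i, a j * x' i (m j) + a i := by
  have hvanish : ∀ j ∈ range n, j ∉ range (i + 1) → a j * x' i (m j) = 0 := by
    intro j _ hj
    rw [horth i j (by simpa using hj), mul_zero]
  simp only [map_sum, map_smul, smul_eq_mul]
  rw [← sum_subset (range_subset_range.2 hi) hvanish, sum_range_succ, hdiag, mul_one]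

lemma norm_coeff_le_two_pow_mul_norm_sum (hdiag : ∀ i, x' i (m i) = 1)
    (horth : ∀ i j, i < j → x' i (m j) = 0) (hx' : ∀ i, ‖x' i‖ ≤ 1) (hm : ∀ j, ‖m j‖ ≤ 1)
    (a : ℕ → 𝕜) {n : ℕ} : ∀ i < n, ‖a i‖ ≤ 2 ^ i * ‖∑ j ∈ range n, a j • m j‖ := by
  set w := ∑ j ∈ range n, a j • m j
  intro i
  induction i using Nat.strong_induction_on with
  | _ i ih =>
    intro hi
    have hearlier : ‖∑ j ∈ range i, a j * x' i (m j)‖ ≤ ∑ j ∈ range i, 2 ^ j * ‖w‖ := by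
      refine (norm_sum_le _ _).trans (sum_le_sum fun j hj => ?_)
      have hj := mem_range.1 hj
      rw [norm_mul]
      calc ‖a j‖ * ‖x' i (m j)‖ ≤ 2 ^ j * ‖w‖ * (1 * 1) :=
            mul_le_mul (ih j hj (hj.trans hi)) (ContinuousLinearMap.le_of_opNorm_le_of_le _
              (hx' i) (hm j)) (norm_nonneg _) (by positivity)
        _ = 2 ^ j * ‖w‖ := by ring
    have hgeom : ∑ j ∈ range i, (2 : ℝ) ^ j * ‖w‖ = (2 ^ i - 1) * ‖w‖ := by
      rw [← sum_mul, geom_sum_eq (by norm_num : (2 : ℝ) ≠ 1)]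
      norm_num
    have hai : a i = x' i w - ∑ j ∈ range i, a j * x' i (m j) := by
      rw [apply_sum_smul_eq_of_triangular hdiag horth a hi]
      ring
    calc ‖a i‖ ≤ ‖x' i w‖ + ‖∑ j ∈ range i, a j * x' i (m j)‖ := hai ▸ norm_sub_le _ _
      _ ≤ 1 * ‖w‖ + (2 ^ i - 1) * ‖w‖ :=
          add_le_add (ContinuousLinearMap.le_of_opNorm_le _ (hx' i) w) (hgeom ▸ hearlier)
      _ = 2 ^ i * ‖w‖ := by ring

end Triangular

lemma norm_sum_smul_sub_sum_smul_lt {𝕜 X : Type*} [NormedField 𝕜] [SeminormedAddCommGroup X]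
    [NormedSpace 𝕜 X] {m z : ℕ → X} {a : ℕ → 𝕜} {n : ℕ} {c W : ℝ} (hc : 0 < c) (hW : 0 < W)
    (ha : ∀ j < n, ‖a j‖ ≤ 2 ^ j * W) (hz : ∀ j < n, ‖z j - m j‖ ≤ c / 2 ^ (2 * j + 1)) :
    ‖∑ j ∈ range n, a j • z j - ∑ j ∈ range n, a j • m j‖ < c * W := by
  rw [← sum_sub_distrib]
  calc ‖∑ j ∈ range n, (a j • z j - a j • m j)‖
      ≤ ∑ j ∈ range n, 2 ^ j * W * (c / 2 ^ (2 * j + 1)) := by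
        refine (norm_sum_le _ _).trans (sum_le_sum fun j hj => ?_)
        have hj := mem_range.1 hj
        rw [← smul_sub, norm_smul]
        exact mul_le_mul (ha j hj) (hz j hj) (norm_nonneg _) (by positivity)
    _ = c * W * (1 - (1 / 2) ^ n) := by
        rw [← sum_two_pow_div_two_pow_two_mul_add_one, mul_sum]
        refine sum_congr rfl fun j _ => ?_
        ring
    _ < c * W := mul_lt_of_lt_one_right (by positivity) (by simp)

theorem perturbed_sum_norm_estimates_general {X : Type*} [NormedAddCommGroup X] [NormedSpace ℝ X]
    (m : ℕ → X) (x' : ℕ → (X →L[ℝ] ℝ))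
    (hnorm : ∀ n, ‖m n‖ = 1 ∧ ‖x' n‖ = 1 ∧ x' n (m n) = 1)
    (horth : ∀ i n, i < n → x' i (m n) = 0)
    (ε δ : ℝ) (hε0 : 0 < ε) (hδ0 : 0 < δ) (hδ1 : δ ≤ 1)
    (z : ℕ → X)
    (hz : ∀ n, ‖z n - m n‖ ≤ ε * δ / 2 ^ (2 * n + 1))
    (n : ℕ) (a : ℕ → ℝ) (ha : ∃ i < n, a i ≠ 0) :
    ‖(∑ j ∈ Finset.range n, a j • z j) - ∑ j ∈ Finset.range n, a j • m j‖
        < ε * δ * ‖∑ j ∈ Finset.range n, a j • m j‖ ∧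
      (1 - ε) * ‖∑ j ∈ Finset.range n, a j • m j‖ < ‖∑ j ∈ Finset.range n, a j • z j‖ ∧
      ‖∑ j ∈ Finset.range n, a j • z j‖
        < (1 + ε) * ‖∑ j ∈ Finset.range n, a j • m j‖ := by
  have hcoeff := norm_coeff_le_two_pow_mul_norm_sum (fun i => (hnorm i).2.2) horth
    (fun i => (hnorm i).2.1.le) (fun j => (hnorm j).1.le) a (n := n)
  obtain ⟨i, hi, hai⟩ := ha
  have hw : 0 < ‖∑ j ∈ range n, a j • m j‖ :=
    pos_of_mul_pos_right ((norm_pos_iff.2 hai).trans_le (hcoeff i hi)) (by positivity)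
  have hmain := norm_sum_smul_sub_sum_smul_lt (mul_pos hε0 hδ0) hw hcoeff (fun j _ => hz j)
  have hδε : ε * δ * ‖∑ j ∈ range n, a j • m j‖ ≤ ε * ‖∑ j ∈ range n, a j • m j‖ := by
    gcongr
    exact mul_le_of_le_one_right hε0.le hδ1
  exact ⟨hmain, norm_bounds_of_norm_sub_lt_mul (hmain.trans_le hδε)⟩

/-- Let `(m n)` and `(x' n)` form a biorthogonal system with
`‖m n‖ = ‖x' n‖ = x' n (m n) = 1` and `x' i (m n) = 0` for `i < n`.  If `0 < ε < 1`,
`0 < δ ≤ 1`, and `(z n)` satisfies `‖z n - m n‖ ≤ ε * δ / 2 ^ (2 * n + 1)`, then for all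
`n ≥ 1` and coefficients `a 0, …, a (n-1)` not all zero, setting
`z = ∑_{j<n} a j • z j` and `w = ∑_{j<n} a j • m j` one has `‖z - w‖ < ε * δ * ‖w‖`,
and consequently `(1 - ε) * ‖w‖ < ‖z‖ < (1 + ε) * ‖w‖`. (Indexing starts at `0`,
so the paper's bound `2 ^ (1 - 2 * n) * ε * δ` for `n ≥ 1` becomes
`ε * δ / 2 ^ (2 * n + 1)` for `n ≥ 0`.) -/
theorem perturbed_sum_norm_estimates {X : Type*} [NormedAddCommGroup X] [NormedSpace ℝ X]
    (m : ℕ → X) (x' : ℕ → (X →L[ℝ] ℝ))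
    (hnorm : ∀ n, ‖m n‖ = 1 ∧ ‖x' n‖ = 1 ∧ x' n (m n) = 1)
    (horth : ∀ i n, i < n → x' i (m n) = 0)
    (ε δ : ℝ) (hε0 : 0 < ε) (hε1 : ε < 1) (hδ0 : 0 < δ) (hδ1 : δ ≤ 1)
    (z : ℕ → X)
    (hz : ∀ n, ‖z n - m n‖ ≤ ε * δ / 2 ^ (2 * n + 1))
    (n : ℕ) (hn : 0 < n) (a : ℕ → ℝ) (ha : ∃ i < n, a i ≠ 0) :
    ‖(∑ j ∈ Finset.range n, a j • z j) - ∑ j ∈ Finset.range n, a j • m j‖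
        < ε * δ * ‖∑ j ∈ Finset.range n, a j • m j‖ ∧
      (1 - ε) * ‖∑ j ∈ Finset.range n, a j • m j‖ < ‖∑ j ∈ Finset.range n, a j • z j‖ ∧
      ‖∑ j ∈ Finset.range n, a j • z j‖
        < (1 + ε) * ‖∑ j ∈ Finset.range n, a j • m j‖ :=
  perturbed_sum_norm_estimates_general m x' hnorm horth ε δ hε0 hδ0 hδ1 z hz n a ha
end

section
/- Let X and Y be real normed vector spaces, let T : X → Y be a bounded linear operator, let E be a dense linear subspace of X, let M be an infinite-dimensional linear subspace of X, and let 0 < ε < 1 and c > 0. Then there exist an infinite-dimensional linear subspace L of E and an injective linear map A : L → M such that for every nonzero z ∈ L: (1 − ε)‖Az‖ ≤ ‖z‖ ≤ (1 + ε)‖Az‖ and | ‖Tz‖ − ‖T(Az)‖ | ≤ εc‖Az‖. -/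
/-!
Choose, by Hahn–Banach and induction, a biorthogonal sequence `(mₖ, fₖ)` with `mₖ ∈ M`, and
approximate each `mₖ` by some `eₖ ∈ E` with `‖fₖ‖ ‖eₖ - mₖ‖ ≤ δ / 2ᵏ⁺¹`. The coefficients of
`x = ∑ aₖ mₖ` are `aₖ = fₖ x`, so replacing every `mₖ` by `eₖ` moves `x` by at most `δ ‖x‖`.
Take `L = span {eₖ}` and let `A` undo this replacement; for `δ` small in terms of `ε`, `c` and
`‖T‖` the three estimates follow from `‖z - A z‖ ≤ δ ‖A z‖`.
-/

open Function Submodule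

theorem exists_mem_forall_eq_zero_notMem {K V : Type*} [Field K] [AddCommGroup V] [Module K V]
    {M : Submodule K V} (hM : ¬ FiniteDimensional K M) (W : Submodule K V) [FiniteDimensional K W]
    {ι : Type*} [Finite ι] (φ : ι → Module.Dual K V) :
    ∃ x ∈ M, (∀ i, φ i x = 0) ∧ x ∉ W := by
  by_contra! h
  let G : M →ₗ[K] ι → K := (LinearMap.pi φ).comp M.subtype
  have : FiniteDimensional K (LinearMap.ker M.subtype) := by rw [ker_subtype]; infer_instance
  have hker : LinearMap.ker G ≤ W.comap M.subtype := fun x hx => h x x.2 fun i => congrFun hx i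
  have : FiniteDimensional K (LinearMap.ker G) := finiteDimensional_of_le hker
  have hcomap : FiniteDimensional K (comap G ⊤) := inferInstance
  rw [comap_top] at hcomap
  exact hM topEquiv.finiteDimensional

theorem exists_strongDual_eq_one_of_notMem {E : Type*} [TopologicalSpace E] [AddCommGroup E]
    [IsTopologicalAddGroup E] [Module ℝ E] [ContinuousSMul ℝ E] [LocallyConvexSpace ℝ E]
    {W : Submodule ℝ E} (hW : IsClosed (W : Set E)) {x : E} (hx : x ∉ W) :
    ∃ f : StrongDual ℝ E, f x = 1 ∧ ∀ w ∈ W, f w = 0 := by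
  obtain ⟨f, u, hfW, hux⟩ := geometric_hahn_banach_closed_point W.convex hW hx
  have hu : 0 < u := by simpa using hfW 0 W.zero_mem
  -- a linear functional bounded above on a subspace vanishes there
  have hf0 : ∀ w ∈ W, f w = 0 := by
    intro w hw
    by_contra hfw
    have := hfW (((u + 1) / f w) • w) (W.smul_mem _ hw)
    rw [map_smul, smul_eq_mul, div_mul_cancel₀ _ hfw] at this
    linarith
  have hfx : f x ≠ 0 := (hu.trans hux).ne'
  exact ⟨(f x)⁻¹ • f, inv_mul_cancel₀ hfx, fun w hw => by simp [hf0 w hw]⟩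

theorem Dense.exists_mem_mul_norm_sub_lt {X : Type*} [SeminormedAddCommGroup X] {E : Set X}
    (hE : Dense E) (x : X) (C : ℝ) {r : ℝ} (hr : 0 < r) : ∃ y ∈ E, C * ‖y - x‖ < r := by
  obtain ⟨y, hy, hyE⟩ := hE.inter_open_nonempty {y | C * ‖y - x‖ < r}
    (isOpen_lt (by fun_prop) continuous_const) ⟨x, by simpa using hr⟩
  exact ⟨y, hyE, hy⟩

section Biorthogonal

variable {X : Type*} [NormedAddCommGroup X] [NormedSpace ℝ X]

theorem exists_biorthogonal_pair {M : Submodule ℝ X} (hM : ¬ FiniteDimensional ℝ M)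
    (s : Finset (X × StrongDual ℝ X)) :
    ∃ q : X × StrongDual ℝ X, (q.1 ∈ M ∧ q.2 q.1 = 1) ∧ ∀ p ∈ s, p.2 q.1 = 0 ∧ q.2 p.1 = 0 := by
  let W := span ℝ (Prod.fst '' (s : Set (X × StrongDual ℝ X)))
  have : FiniteDimensional ℝ W := FiniteDimensional.span_of_finite ℝ (s.finite_toSet.image _)
  obtain ⟨x, hxM, hx0, hxW⟩ :=
    exists_mem_forall_eq_zero_notMem hM W fun p : s => (p.1.2 : X →ₗ[ℝ] ℝ)
  obtain ⟨f, hfx, hfW⟩ := exists_strongDual_eq_one_of_notMem W.closed_of_finiteDimensional hxW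
  exact ⟨(x, f), ⟨hxM, hfx⟩, fun p hp => ⟨hx0 ⟨p, hp⟩, hfW _ (subset_span ⟨p, hp, rfl⟩)⟩⟩

theorem exists_biorthogonal_seq {M : Submodule ℝ X} (hM : ¬ FiniteDimensional ℝ M) :
    ∃ (m : ℕ → X) (f : ℕ → StrongDual ℝ X), (∀ k, m k ∈ M) ∧
      ∀ j k, f j (m k) = if j = k then 1 else 0 := by
  obtain ⟨q, hq, hqq⟩ :=
    exists_seq_of_forall_finset_exists _ _ fun s _ => exists_biorthogonal_pair hM s
  refine ⟨fun k => (q k).1, fun k => (q k).2, fun k => (hq k).1, fun j k => ?_⟩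
  rcases lt_trichotomy j k with hjk | rfl | hkj
  · simpa [hjk.ne] using (hqq j k hjk).1
  · simpa using (hq j).2
  · simpa [hkj.ne'] using (hqq k j hkj).2

variable {ι : Type*} [DecidableEq ι] {m : ι → X} {f : ι → StrongDual ℝ X}

theorem apply_linearCombination_of_biorthogonal (hmf : ∀ j k, f j (m k) = if j = k then 1 else 0)
    (a : ι →₀ ℝ) (j : ι) : f j (Finsupp.linearCombination ℝ m a) = a j := by
  simp [Finsupp.linearCombination_apply, map_finsuppSum, hmf, eq_comm]

theorem linearIndependent_of_biorthogonal (hmf : ∀ j k, f j (m k) = if j = k then 1 else 0) :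
    LinearIndependent ℝ m :=
  linearIndependent_iff.2 fun a ha => Finsupp.ext fun j => by
    rw [← apply_linearCombination_of_biorthogonal hmf a j, ha, map_zero, Finsupp.coe_zero,
      Pi.zero_apply]

end Biorthogonal

section Perturbation

variable {X : Type*} [NormedAddCommGroup X] [NormedSpace ℝ X]

theorem norm_linearCombination_sub_le {m e : ℕ → X} {f : ℕ → StrongDual ℝ X}
    (hmf : ∀ j k, f j (m k) = if j = k then 1 else 0) {δ : ℝ}
    (he : ∀ k, ‖f k‖ * ‖e k - m k‖ ≤ δ / 2 / 2 ^ k) (a : ℕ →₀ ℝ) :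
    ‖Finsupp.linearCombination ℝ e a - Finsupp.linearCombination ℝ m a‖ ≤
      δ * ‖Finsupp.linearCombination ℝ m a‖ := by
  set x := Finsupp.linearCombination ℝ m a
  have hδ : 0 ≤ δ := by
    have := (mul_nonneg (norm_nonneg (f 0)) (norm_nonneg (e 0 - m 0))).trans (he 0)
    norm_num at this
    linarith
  have hdiff : Finsupp.linearCombination ℝ e a - x = ∑ k ∈ a.support, a k • (e k - m k) := by
    simp [x, Finsupp.linearCombination_apply, Finsupp.sum, smul_sub]
  have hterm : ∀ k, ‖a k • (e k - m k)‖ ≤ ‖x‖ * (δ / 2 / 2 ^ k) := by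
    intro k
    rw [norm_smul, ← apply_linearCombination_of_biorthogonal hmf a k]
    calc ‖f k x‖ * ‖e k - m k‖ ≤ ‖f k‖ * ‖x‖ * ‖e k - m k‖ := by gcongr; exact (f k).le_opNorm x
      _ = ‖x‖ * (‖f k‖ * ‖e k - m k‖) := by ring
      _ ≤ ‖x‖ * (δ / 2 / 2 ^ k) := by gcongr; exact he k
  calc ‖Finsupp.linearCombination ℝ e a - x‖
      ≤ ∑ k ∈ a.support, ‖x‖ * (δ / 2 / 2 ^ k) := hdiff ▸ norm_sum_le_of_le _ fun k _ => hterm k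
    _ = ‖x‖ * ∑ k ∈ a.support, δ / 2 / 2 ^ k := by rw [Finset.mul_sum]
    _ ≤ ‖x‖ * δ := by
        gcongr
        simpa [tsum_geometric_two'] using
          (summable_geometric_two' δ).sum_le_tsum a.support fun k _ => by positivity
    _ = δ * ‖x‖ := mul_comm _ _

variable {ι : Type*} {v w : ι → X} {δ : ℝ}

theorem LinearIndependent.of_norm_linearCombination_sub_le (hv : LinearIndependent ℝ v)
    (hδ : δ < 1)
    (h : ∀ a, ‖Finsupp.linearCombination ℝ w a - Finsupp.linearCombination ℝ v a‖ ≤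
      δ * ‖Finsupp.linearCombination ℝ v a‖) :
    LinearIndependent ℝ w := by
  rw [linearIndependent_iff] at hv ⊢
  intro a ha
  have hva := h a
  rw [ha, zero_sub, norm_neg] at hva
  exact hv a (norm_le_zero_iff.1 (by nlinarith [norm_nonneg (Finsupp.linearCombination ℝ v a)]))

theorem exists_injective_linearMap_norm_sub_le {M : Submodule ℝ X} (hvM : ∀ i, v i ∈ M)
    (hv : LinearIndependent ℝ v) (hw : LinearIndependent ℝ w)
    (h : ∀ a, ‖Finsupp.linearCombination ℝ w a - Finsupp.linearCombination ℝ v a‖ ≤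
      δ * ‖Finsupp.linearCombination ℝ v a‖) :
    ∃ A : span ℝ (Set.range w) →ₗ[ℝ] M, Injective A ∧
      ∀ z : span ℝ (Set.range w), ‖(z : X) - A z‖ ≤ δ * ‖(A z : X)‖ := by
  have hvM' : ∀ a, Finsupp.linearCombination ℝ v a ∈ M := fun a =>
    span_le.2 (Set.range_subset_iff.2 hvM) (Finsupp.range_linearCombination (R := ℝ) (v := v) ▸
      LinearMap.mem_range_self _ a)
  refine ⟨(Finsupp.linearCombination ℝ v).codRestrict M hvM' ∘ₗ hw.repr, ?_, fun z => ?_⟩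
  · exact ((LinearMap.injective_codRestrict_iff hvM').2 hv).comp
      hw.linearCombinationEquiv.symm.injective
  · simpa [hw.linearCombination_repr] using h (hw.repr z)

end Perturbation

theorem norm_bounds_of_norm_sub_le {X Y : Type*} [SeminormedAddCommGroup X] [NormedSpace ℝ X]
    [SeminormedAddCommGroup Y] [NormedSpace ℝ Y] (T : X →L[ℝ] Y) {x z : X} {δ ε c : ℝ}
    (h : ‖z - x‖ ≤ δ * ‖x‖) (hδε : δ ≤ ε) (hδT : ‖T‖ * δ ≤ ε * c) :
    (1 - ε) * ‖x‖ ≤ ‖z‖ ∧ ‖z‖ ≤ (1 + ε) * ‖x‖ ∧ |‖T z‖ - ‖T x‖| ≤ ε * c * ‖x‖ := by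
  have hz := abs_le.1 ((abs_norm_sub_norm_le z x).trans h)
  have hδx : δ * ‖x‖ ≤ ε * ‖x‖ := by gcongr
  refine ⟨by linarith [hz.1], by linarith [hz.2], ?_⟩
  calc |‖T z‖ - ‖T x‖| ≤ ‖T (z - x)‖ := map_sub T z x ▸ abs_norm_sub_norm_le _ _
    _ ≤ ‖T‖ * (δ * ‖x‖) := (T.le_opNorm _).trans (by gcongr)
    _ = ‖T‖ * δ * ‖x‖ := by ring
    _ ≤ ε * c * ‖x‖ := by gcongr

/-- Let `T : X → Y` be a bounded linear operator, `E` a dense subspace of `X`, `M` an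
infinite-dimensional subspace of `X`, `0 < ε < 1` and `c > 0`.  Then there exist an
infinite-dimensional subspace `L` of `E` and an injective linear map `A : L → M` such
that every nonzero `z ∈ L` satisfies `(1 - ε) * ‖A z‖ ≤ ‖z‖ ≤ (1 + ε) * ‖A z‖` and
`|‖T z‖ - ‖T (A z)‖| ≤ ε * c * ‖A z‖`. -/
theorem exists_subspace_almost_isometry {X Y : Type*}
    [NormedAddCommGroup X] [NormedSpace ℝ X] [NormedAddCommGroup Y] [NormedSpace ℝ Y]
    (T : X →L[ℝ] Y) (E : Submodule ℝ X) (hE : Dense (E : Set X))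
    (M : Submodule ℝ X) (hM : ¬ FiniteDimensional ℝ M)
    (ε c : ℝ) (hε0 : 0 < ε) (hε1 : ε < 1) (hc : 0 < c) :
    ∃ L : Submodule ℝ X, L ≤ E ∧ ¬ FiniteDimensional ℝ L ∧
      ∃ A : L →ₗ[ℝ] M, Function.Injective A ∧
        ∀ z : L, z ≠ 0 →
          (1 - ε) * ‖(A z : X)‖ ≤ ‖(z : X)‖ ∧
          ‖(z : X)‖ ≤ (1 + ε) * ‖(A z : X)‖ ∧
          |‖T (z : X)‖ - ‖T (A z : X)‖| ≤ ε * c * ‖(A z : X)‖ := by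
  obtain ⟨m, f, hmM, hmf⟩ := exists_biorthogonal_seq hM
  obtain ⟨δ, hδ0, hδε, hδT⟩ : ∃ δ > 0, δ ≤ ε ∧ ‖T‖ * δ ≤ ε * c := by
    refine ⟨ε * c / (‖T‖ + c), by positivity, ?_, ?_⟩
    · rw [div_le_iff₀ (by positivity)]; nlinarith [mul_nonneg hε0.le (norm_nonneg T)]
    · rw [mul_div_assoc', div_le_iff₀ (by positivity)]; nlinarith [mul_pos (mul_pos hε0 hc) hc]
  choose e heE he using fun k =>
    hE.exists_mem_mul_norm_sub_lt (m k) ‖f k‖ (r := δ / 2 / 2 ^ k) (by positivity)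
  have hclose := norm_linearCombination_sub_le hmf fun k => (he k).le
  have hm := linearIndependent_of_biorthogonal hmf
  have he_li := hm.of_norm_linearCombination_sub_le (hδε.trans_lt hε1) hclose
  obtain ⟨A, hA, hAz⟩ := exists_injective_linearMap_norm_sub_le hmM hm he_li hclose
  refine ⟨span ℝ (Set.range e), span_le.2 (Set.range_subset_iff.2 heE),
    fun _ => Module.Finite.not_linearIndependent_of_infinite _ (linearIndependent_span he_li),
    A, hA, fun z _ => norm_bounds_of_norm_sub_le T (hAz z) hδε hδT⟩
end
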